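/- Let S be a completely positive linear map from operators on H_out ⊗ H_in to operators on K_out ⊗ K_in. Then S sends Choi operators of channels to Choi operators of channels if and only if there exists a completely positive unital map N : End(H_in) → End(K_in) such that Tr_{K_out}[S(E)] = N(Tr_{H_out}[E]) for every operator E on H_out ⊗ H_in. -/

import Mathlib

open Matrix Kronecker BigOperators ComplexOrder

/-- Partial trace over the first tensor factor. -/
noncomputable def ptrFst {o i : Type*} [Fintype o] (M : Matrix (o × i) (o × i) ℂ) :
    Matrix i i ℂ :=
  Matrix.of fun a b => ∑ k, M (k, a) (k, b)

/-- Partial trace over the second tensor factor. -/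
noncomputable def ptrSnd {o i : Type*} [Fintype i] (M : Matrix (o × i) (o × i) ℂ) :
    Matrix o o ℂ :=
  Matrix.of fun a b => ∑ k, M (a, k) (b, k)

/-- Choi operator of a linear map between matrix algebras. -/
noncomputable def choi {i o : Type*} [Fintype i] [DecidableEq i]
    (E : Matrix i i ℂ →ₗ[ℂ] Matrix o o ℂ) : Matrix (o × i) (o × i) ℂ :=
  ∑ m, ∑ n, (E (Matrix.single m n 1)) ⊗ₖ (Matrix.single m n 1)

/-- Complete positivity, expressed via existence of a Kraus decomposition
(equivalent to the usual definition in finite dimensions). -/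
def IsCP {i o : Type*} [Fintype i] [Fintype o]
    (E : Matrix i i ℂ →ₗ[ℂ] Matrix o o ℂ) : Prop :=
  ∃ (k : ℕ) (K : Fin k → Matrix o i ℂ), ∀ X, E X = ∑ j, K j * X * (K j)ᴴ

/-! The map `N` is forced: `N X = |o|⁻¹ · Tr_{K_out} S(1 ⊗ X)`, a positive multiple of a
composite of completely positive maps. Determinism says `Tr_{K_out} ∘ S` is `1` on Choi
operators; a Hermitian `E` with `Tr_{H_out} E = 0` is the difference of the positive multiples
`E + c·1` and `c·1` of Choi operators (for `c` large), so `Tr_{K_out} ∘ S` kills it. Hence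
`Tr_{K_out} ∘ S` factors through `Tr_{H_out}`, with `X ↦ |o|⁻¹ · 1 ⊗ X` as a right inverse of
`Tr_{H_out}`. -/

open ComplexStarModule

section PartialTrace

variable {o i : Type*} [Fintype o]

lemma ptrFst_add (M N : Matrix (o × i) (o × i) ℂ) :
    ptrFst (M + N) = ptrFst M + ptrFst N := by
  ext a b
  simp [ptrFst, Finset.sum_add_distrib]

lemma ptrFst_smul (c : ℂ) (M : Matrix (o × i) (o × i) ℂ) : ptrFst (c • M) = c • ptrFst M := by
  ext a b
  simp [ptrFst, Finset.mul_sum]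

noncomputable def ptrFstLinearMap : Matrix (o × i) (o × i) ℂ →ₗ[ℂ] Matrix i i ℂ where
  toFun := ptrFst
  map_add' := ptrFst_add
  map_smul' := ptrFst_smul

@[simp]
lemma ptrFstLinearMap_apply (M : Matrix (o × i) (o × i) ℂ) : ptrFstLinearMap M = ptrFst M :=
  rfl

lemma ptrFst_sub (M N : Matrix (o × i) (o × i) ℂ) : ptrFst (M - N) = ptrFst M - ptrFst N :=
  map_sub ptrFstLinearMap M N

lemma ptrFst_conjTranspose (M : Matrix (o × i) (o × i) ℂ) : ptrFst Mᴴ = (ptrFst M)ᴴ := by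
  ext a b
  simp [ptrFst]

lemma ptrFst_one_kronecker [DecidableEq o] (X : Matrix i i ℂ) :
    ptrFst ((1 : Matrix o o ℂ) ⊗ₖ X) = (Fintype.card o : ℂ) • X := by
  ext a b
  simp [ptrFst, kroneckerMap_apply, one_apply]

lemma ptrFst_one [DecidableEq o] [DecidableEq i] :
    ptrFst (1 : Matrix (o × i) (o × i) ℂ) = (Fintype.card o : ℂ) • 1 := by
  rw [← one_kronecker_one, ptrFst_one_kronecker]

end PartialTrace

section KronEmbed

variable {o : Type*} (i : Type*) [DecidableEq o] [DecidableEq i]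

/-- The isometry `v ↦ e_k ⊗ v`. -/
noncomputable def kronEmbed (k : o) : Matrix (o × i) i ℂ :=
  (1 : Matrix (o × i) (o × i) ℂ).submatrix id (Prod.mk k)

variable {i} [Fintype o] [Fintype i]

lemma sum_kronEmbed_mul_mul_conjTranspose (X : Matrix i i ℂ) :
    ∑ k : o, kronEmbed i k * X * (kronEmbed i k)ᴴ = (1 : Matrix o o ℂ) ⊗ₖ X := by
  ext ⟨p₁, p₂⟩ ⟨q₁, q₂⟩
  simp [Matrix.sum_apply, kronEmbed, mul_apply, one_apply, kroneckerMap_apply, ite_and, eq_comm]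

lemma sum_conjTranspose_kronEmbed_mul_mul (M : Matrix (o × i) (o × i) ℂ) :
    ∑ k : o, (kronEmbed i k)ᴴ * M * kronEmbed i k = ptrFst M := by
  ext a b
  simp [Matrix.sum_apply, kronEmbed, mul_apply, one_apply, ptrFst]

end KronEmbed

namespace IsCP

variable {i m o : Type*} [Fintype i] [Fintype m] [Fintype o]

lemma of_kraus {ι : Type*} [Fintype ι] {E : Matrix i i ℂ →ₗ[ℂ] Matrix o o ℂ}
    (K : ι → Matrix o i ℂ) (hK : ∀ X, E X = ∑ j, K j * X * (K j)ᴴ) : IsCP E :=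
  ⟨Fintype.card ι, K ∘ (Fintype.equivFin ι).symm, fun X => by
    rw [hK, ← (Fintype.equivFin ι).symm.sum_comp]
    rfl⟩

lemma comp {F : Matrix m m ℂ →ₗ[ℂ] Matrix o o ℂ} {E : Matrix i i ℂ →ₗ[ℂ] Matrix m m ℂ}
    (hF : IsCP F) (hE : IsCP E) : IsCP (F ∘ₗ E) := by
  obtain ⟨k, L, hL⟩ := hF
  obtain ⟨l, K, hK⟩ := hE
  refine of_kraus (fun p : Fin k × Fin l => L p.1 * K p.2) fun X => ?_
  rw [LinearMap.comp_apply, hK, hL, Fintype.sum_prod_type]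
  refine Finset.sum_congr rfl fun a _ => ?_
  simp only [Matrix.mul_sum, Matrix.sum_mul, conjTranspose_mul, Matrix.mul_assoc]

lemma smul {E : Matrix i i ℂ →ₗ[ℂ] Matrix o o ℂ} (hE : IsCP E) {c : ℂ} (hc : 0 ≤ c) :
    IsCP (c • E) := by
  obtain ⟨k, K, hK⟩ := hE
  obtain ⟨r, hr, rfl⟩ : ∃ r : ℝ, 0 ≤ r ∧ (r : ℂ) = c := RCLike.nonneg_iff_exists_ofReal.mp hc
  refine ⟨k, fun j => (Real.sqrt r : ℂ) • K j, fun X => ?_⟩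
  have hsq : (Real.sqrt r : ℂ) * star (Real.sqrt r : ℂ) = r := by
    rw [Complex.star_def, Complex.conj_ofReal, ← Complex.ofReal_mul, Real.mul_self_sqrt hr]
  rw [LinearMap.smul_apply, hK, Finset.smul_sum]
  refine Finset.sum_congr rfl fun j _ => ?_
  rw [conjTranspose_smul, Matrix.smul_mul, Matrix.smul_mul, Matrix.mul_smul, smul_smul, hsq]

end IsCP

lemma isCP_ptrFstLinearMap {o i : Type*} [Fintype o] [DecidableEq o] [Fintype i] [DecidableEq i] :
    IsCP (ptrFstLinearMap : Matrix (o × i) (o × i) ℂ →ₗ[ℂ] Matrix i i ℂ) :=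
  .of_kraus (fun k : o => (kronEmbed i k)ᴴ) fun M => by
    simp only [ptrFstLinearMap_apply, conjTranspose_conjTranspose,
      sum_conjTranspose_kronEmbed_mul_mul]

lemma isCP_kroneckerBilinear_one {o i : Type*} [Fintype o] [DecidableEq o] [Fintype i]
    [DecidableEq i] : IsCP (kroneckerBilinear (R := ℂ) (1 : Matrix o o ℂ) (n := i) (p := i)) :=
  .of_kraus (kronEmbed i) fun X => (sum_kronEmbed_mul_mul_conjTranspose X).symm

lemma LinearMap.ext_of_isSelfAdjoint {A M : Type*} [AddCommGroup A] [Module ℂ A]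
    [StarAddMonoid A] [StarModule ℂ A] [AddCommGroup M] [Module ℂ M] {f g : A →ₗ[ℂ] M}
    (h : ∀ a, IsSelfAdjoint a → f a = g a) : f = g := by
  ext a
  rw [← realPart_add_I_smul_imaginaryPart a]
  simp only [map_add, map_smul, h _ (ℜ a).prop, h _ (ℑ a).prop]

open scoped Matrix.Norms.L2Operator MatrixOrder in
lemma Matrix.IsHermitian.exists_posSemidef_add_smul_one {n : Type*} [Fintype n] [DecidableEq n]
    {E : Matrix n n ℂ} (hE : E.IsHermitian) : ∃ c : ℝ, 0 < c ∧ (E + (c : ℂ) • 1).PosSemidef := by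
  refine ⟨‖E‖ + 1, by positivity, ?_⟩
  have h := hE.isSelfAdjoint.neg_algebraMap_norm_le_self
  rw [le_iff, sub_neg_eq_add, Algebra.algebraMap_eq_smul_one] at h
  have : E + ((‖E‖ + 1 : ℝ) : ℂ) • (1 : Matrix n n ℂ) = E + ‖E‖ • 1 + 1 := by
    rw [Complex.ofReal_add, Complex.ofReal_one, add_smul, one_smul, add_assoc, Complex.coe_smul]
  exact this ▸ h.add PosSemidef.one

section Supermap

variable {o i ko ki : Type*} [Fintype o] [Fintype ko]

def IsDeterministic [DecidableEq i] [DecidableEq ki]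
    (S : Matrix (o × i) (o × i) ℂ →ₗ[ℂ] Matrix (ko × ki) (ko × ki) ℂ) : Prop :=
  ∀ E : Matrix (o × i) (o × i) ℂ, E.PosSemidef → ptrFst E = 1 → ptrFst (S E) = 1

noncomputable def reducedMap [DecidableEq o]
    (S : Matrix (o × i) (o × i) ℂ →ₗ[ℂ] Matrix (ko × ki) (ko × ki) ℂ) :
    Matrix i i ℂ →ₗ[ℂ] Matrix ki ki ℂ :=
  (Fintype.card o : ℂ)⁻¹ • (ptrFstLinearMap ∘ₗ S ∘ₗ kroneckerBilinear (R := ℂ) 1)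

variable {S : Matrix (o × i) (o × i) ℂ →ₗ[ℂ] Matrix (ko × ki) (ko × ki) ℂ}

lemma reducedMap_apply [DecidableEq o] (X : Matrix i i ℂ) :
    reducedMap S X = (Fintype.card o : ℂ)⁻¹ • ptrFst (S ((1 : Matrix o o ℂ) ⊗ₖ X)) :=
  rfl

lemma IsCP.reducedMap [DecidableEq o] [Fintype i] [DecidableEq i] [DecidableEq ko] [Fintype ki]
    [DecidableEq ki] (hS : IsCP S) : IsCP (reducedMap S) :=
  ((isCP_ptrFstLinearMap.comp hS).comp isCP_kroneckerBilinear_one).smul (by positivity)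

namespace IsDeterministic

variable [DecidableEq i] [DecidableEq ki]

lemma ptrFst_map_eq_smul_one (hS : IsDeterministic S) {F : Matrix (o × i) (o × i) ℂ}
    (hF : F.PosSemidef) {s : ℝ} (hs : 0 < s) (hFs : ptrFst F = (s : ℂ) • 1) :
    ptrFst (S F) = (s : ℂ) • 1 := by
  have hs' : (s : ℂ) ≠ 0 := Complex.ofReal_ne_zero.mpr hs.ne'
  have h := hS ((s : ℂ)⁻¹ • F) (hF.smul (by positivity))
    (by rw [ptrFst_smul, hFs, inv_smul_smul₀ hs'])
  rw [map_smul, ptrFst_smul] at h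
  rw [← h, smul_inv_smul₀ hs']

variable [DecidableEq o] [Nonempty o]

lemma ptrFst_map_eq_zero [Fintype i] (hS : IsDeterministic S) {E : Matrix (o × i) (o × i) ℂ}
    (hE : E.IsHermitian) (hE₀ : ptrFst E = 0) : ptrFst (S E) = 0 := by
  obtain ⟨c, hc, hEc⟩ := hE.exists_posSemidef_add_smul_one
  have hcn : 0 < c * Fintype.card o := mul_pos hc (Nat.cast_pos.mpr Fintype.card_pos)
  have hptr : ptrFst ((c : ℂ) • (1 : Matrix (o × i) (o × i) ℂ)) =
      ((c * Fintype.card o : ℝ) : ℂ) • 1 := by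
    rw [ptrFst_smul, ptrFst_one, smul_smul, Complex.ofReal_mul, Complex.ofReal_natCast]
  have h₁ := hS.ptrFst_map_eq_smul_one (PosSemidef.one.smul (by positivity)) hcn hptr
  have h₂ := hS.ptrFst_map_eq_smul_one hEc hcn (by rw [ptrFst_add, hE₀, zero_add, hptr])
  rwa [map_add, ptrFst_add, h₁, add_eq_right] at h₂

lemma reducedMap_one (hS : IsDeterministic S) : reducedMap S 1 = 1 := by
  have hn : (0 : ℝ) < Fintype.card o := Nat.cast_pos.mpr Fintype.card_pos
  rw [reducedMap_apply, one_kronecker_one,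
    hS.ptrFst_map_eq_smul_one PosSemidef.one hn (by rw [ptrFst_one, Complex.ofReal_natCast]),
    Complex.ofReal_natCast, inv_smul_smul₀ (by positivity)]

lemma ptrFst_map_eq_reducedMap_ptrFst [Fintype i] (hS : IsDeterministic S)
    (E : Matrix (o × i) (o × i) ℂ) : ptrFst (S E) = reducedMap S (ptrFst E) := by
  suffices ptrFstLinearMap ∘ₗ S = reducedMap S ∘ₗ ptrFstLinearMap from LinearMap.congr_fun this E
  refine LinearMap.ext_of_isSelfAdjoint fun A hA => ?_
  set D := A - (Fintype.card o : ℂ)⁻¹ • ((1 : Matrix o o ℂ) ⊗ₖ ptrFst A)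
  have hD : D.IsHermitian := by
    refine hA.isHermitian.sub (IsHermitian.smul ?_ (IsSelfAdjoint.natCast _).inv₀)
    rw [IsHermitian, conjTranspose_kronecker, conjTranspose_one, ← ptrFst_conjTranspose,
      hA.isHermitian.eq]
  have hD₀ : ptrFst D = 0 := by
    rw [ptrFst_sub, ptrFst_smul, ptrFst_one_kronecker, inv_smul_smul₀ (by positivity), sub_self]
  have h := hS.ptrFst_map_eq_zero hD hD₀
  rwa [map_sub, map_smul, ptrFst_sub, ptrFst_smul, sub_eq_zero] at h

end IsDeterministic

end Supermap

theorem deterministic_iff_effect_map_general {i o ki ko : Type*}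
    [Fintype i] [DecidableEq i] [Fintype o] [DecidableEq o] [Nonempty o]
    [Fintype ki] [DecidableEq ki] [Fintype ko] [DecidableEq ko]
    (S : Matrix (o × i) (o × i) ℂ →ₗ[ℂ] Matrix (ko × ki) (ko × ki) ℂ)
    (hS : IsCP S) :
    (∀ E : Matrix (o × i) (o × i) ℂ, E.PosSemidef → ptrFst E = 1 →
        ptrFst (S E) = 1) ↔
    (∃ N : Matrix i i ℂ →ₗ[ℂ] Matrix ki ki ℂ, IsCP N ∧ N 1 = 1 ∧
      ∀ E : Matrix (o × i) (o × i) ℂ, ptrFst (S E) = N (ptrFst E)) := by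
  constructor
  · intro hdet
    exact ⟨reducedMap S, hS.reducedMap, IsDeterministic.reducedMap_one hdet,
      IsDeterministic.ptrFst_map_eq_reducedMap_ptrFst hdet⟩
  · rintro ⟨N, -, hN₁, hN⟩ E - hE
    rw [hN, hE, hN₁]

/-- A CP supermap `S` is deterministic iff there is a CP unital map `N`
with `Tr_{K_out}[S(E)] = N(Tr_{H_out}[E])` for every `E`. -/
theorem deterministic_iff_effect_map {i o ki ko : Type*}
    [Fintype i] [DecidableEq i] [Fintype o] [DecidableEq o] [Nonempty o]
    [Fintype ki] [DecidableEq ki] [Fintype ko] [DecidableEq ko] [Nonempty ko]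
    (S : Matrix (o × i) (o × i) ℂ →ₗ[ℂ] Matrix (ko × ki) (ko × ki) ℂ)
    (hS : IsCP S) :
    (∀ E : Matrix (o × i) (o × i) ℂ, E.PosSemidef → ptrFst E = 1 →
        ptrFst (S E) = 1) ↔
    (∃ N : Matrix i i ℂ →ₗ[ℂ] Matrix ki ki ℂ, IsCP N ∧ N 1 = 1 ∧
      ∀ E : Matrix (o × i) (o × i) ℂ, ptrFst (S E) = N (ptrFst E)) :=
  deterministic_iff_effect_map_general S hS
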